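/- arXiv:2301.08867 — 9 statements merged into one kernel-verified Lean document; each statement's English description precedes it below -/
import Mathlib

section
/- If X is a topological space, F is a filter base on X, and F converges to a compact set K (i.e., every open set containing K contains some member of F), then F is total, i.e., every filter base H extending F satisfies ⋂{cl(H) : H ∈ H} ≠ ∅. -/
open Set Topology

/-- A filter base on `X`: a nonempty family of subsets of `X`, not containing `∅`,
closed under pairwise intersections. -/
def FilterBaseOn (X : Type*) (F : Set (Set X)) : Prop :=
  F.Nonempty ∧ ∅ ∉ F ∧ ∀ A ∈ F, ∀ B ∈ F, A ∩ B ∈ F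

/-- `F` converges to the set `W`: every open set containing `W` contains a member of `F`. -/
def ConvergesTo {X : Type*} [TopologicalSpace X] (F : Set (Set X)) (W : Set X) : Prop :=
  ∀ U : Set X, IsOpen U → W ⊆ U → ∃ A ∈ F, A ⊆ U

/-- `F` is total: every filter base extending `F` has nonempty adherence
(intersection of the closures of all its members). -/
def TotalFB {X : Type*} [TopologicalSpace X] (F : Set (Set X)) : Prop :=
  ∀ H : Set (Set X), FilterBaseOn X H → F ⊆ H → (⋂ A ∈ H, closure A).Nonempty

/-- `F` is stable under countable intersections: every countable subfamily of `F`
has a member of `F` contained in its intersection. -/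
def StableCI {X : Type*} (F : Set (Set X)) : Prop :=
  ∀ S ⊆ F, S.Countable → ∃ H ∈ F, H ⊆ ⋂₀ S

/-- `F` is ω-closed: the intersection of any nonempty countable subfamily of `F` belongs to `F`. -/
def OmegaClosedFB {X : Type*} (F : Set (Set X)) : Prop :=
  ∀ S ⊆ F, S.Countable → S.Nonempty → ⋂₀ S ∈ F

/-- `F` is δ-stable: every nonempty countable subfamily of `F` has nonempty intersection. -/
def DeltaStableFB {X : Type*} (F : Set (Set X)) : Prop :=
  ∀ S ⊆ F, S.Countable → S.Nonempty → (⋂₀ S).Nonempty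

/-- `G_δ(K)`: the family of Gδ subsets (countable intersections of open sets) containing `K`. -/
def GdeltaNbhds {X : Type*} [TopologicalSpace X] (K : Set X) : Set (Set X) :=
  {G | K ⊆ G ∧ IsGδ G}

/-- `F ∨ G = {F₀ ∩ F₁ : F₀, F₁ ∈ F ∪ G}`. -/
def joinFB {X : Type*} (F G : Set (Set X)) : Set (Set X) :=
  {A | ∃ F₀ ∈ F ∪ G, ∃ F₁ ∈ F ∪ G, A = F₀ ∩ F₁}

/-- `X` is totally Lindelöf: every filter base stable under countable intersections
extends to a total filter base stable under countable intersections. -/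
def TotallyLindelofSpace (X : Type*) [TopologicalSpace X] : Prop :=
  ∀ F : Set (Set X), FilterBaseOn X F → StableCI F →
    ∃ H : Set (Set X), FilterBaseOn X H ∧ StableCI H ∧ F ⊆ H ∧ TotalFB H

/-- `X` is Alster: every cover of `X` by Gδ sets such that every compact subset of `X`
is contained in a single member admits a countable subcover. -/
def AlsterSpace (X : Type*) [TopologicalSpace X] : Prop :=
  ∀ 𝒢 : Set (Set X), (∀ G ∈ 𝒢, IsGδ G) → (∀ K : Set X, IsCompact K → ∃ G ∈ 𝒢, K ⊆ G) →
    ∃ 𝒞 ⊆ 𝒢, 𝒞.Countable ∧ ⋃₀ 𝒞 = Set.univ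

/-- `D` is a discrete subset: each of its points has an open neighborhood meeting `D`
only in that point. -/
def IsDiscreteSubset {X : Type*} [TopologicalSpace X] (D : Set X) : Prop :=
  ∀ a ∈ D, ∃ U : Set X, IsOpen U ∧ U ∩ D = {a}

/-- The first uncountable ordinal ω₁. -/
noncomputable def omega1 : Ordinal := (Cardinal.aleph 1).ord

/- A filter base `H ⊇ F` generates a proper filter finer than that of `F`, hence, by convergence,
finer than the neighbourhood filter of `K`; compactness of `K` then provides a cluster point of
this filter, which lies in the closure of every member of `H`. -/

theorem IsCompact.exists_clusterPt_of_le_nhdsSet {X : Type*} [TopologicalSpace X] {K : Set X}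
    (hK : IsCompact K) {l : Filter X} [l.NeBot] (hl : l ≤ 𝓝ˢ K) : ∃ x ∈ K, ClusterPt x l := by
  by_contra! h
  have hdisj : Disjoint (𝓝ˢ K) l :=
    hK.disjoint_nhdsSet_left.2 fun x hx => not_not.1 (clusterPt_iff_not_disjoint.not.1 (h x hx))
  exact ‹l.NeBot›.ne (hdisj.symm.eq_bot_of_le hl)

namespace FilterBaseOn

variable {X : Type*} {H : Set (Set X)}

def toFilterBasis (hH : FilterBaseOn X H) : FilterBasis X where
  sets := H
  nonempty := hH.1
  inter_sets hA hB := ⟨_, hH.2.2 _ hA _ hB, subset_rfl⟩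

theorem hasBasis_filter (hH : FilterBaseOn X H) :
    hH.toFilterBasis.filter.HasBasis (· ∈ H) id :=
  hH.toFilterBasis.hasBasis

theorem neBot_filter (hH : FilterBaseOn X H) : hH.toFilterBasis.filter.NeBot :=
  hH.hasBasis_filter.neBot_iff.2 fun hA => nonempty_iff_ne_empty.2 fun h => hH.2.1 (h ▸ hA)

theorem clusterPt_filter_iff [TopologicalSpace X] (hH : FilterBaseOn X H) {x : X} :
    ClusterPt x hH.toFilterBasis.filter ↔ x ∈ ⋂ A ∈ H, closure A := by
  rw [hH.hasBasis_filter.clusterPt_iff_forall_mem_closure, mem_iInter₂]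
  rfl

theorem filter_le_nhdsSet [TopologicalSpace X] (hH : FilterBaseOn X H) {F : Set (Set X)}
    {K : Set X} (hFH : F ⊆ H) (hconv : ConvergesTo F K) :
    hH.toFilterBasis.filter ≤ 𝓝ˢ K := by
  refine (hasBasis_nhdsSet K).ge_iff.2 fun U ⟨hUo, hKU⟩ => ?_
  obtain ⟨A, hAF, hAU⟩ := hconv U hUo hKU
  exact hH.hasBasis_filter.mem_of_superset (hFH hAF) hAU

end FilterBaseOn

theorem stmt0_general {X : Type*} [TopologicalSpace X] (F : Set (Set X)) (K : Set X)
    (hK : IsCompact K) (hconv : ConvergesTo F K) :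
    TotalFB F := by
  intro H hH hFH
  have := hH.neBot_filter
  obtain ⟨x, -, hx⟩ := hK.exists_clusterPt_of_le_nhdsSet (hH.filter_le_nhdsSet hFH hconv)
  exact ⟨x, hH.clusterPt_filter_iff.1 hx⟩

theorem stmt0 {X : Type*} [TopologicalSpace X] (F : Set (Set X)) (K : Set X)
    (hF : FilterBaseOn X F) (hK : IsCompact K) (hconv : ConvergesTo F K) :
    TotalFB F :=
  stmt0_general F K hK hconv
end

section
/- For a topological space X, the following are equivalent: (a) X is totally Lindelöf; (b) every ω-closed filter base on X extends to a total ω-closed filter base on X; (c) every δ-stable filter base on X extends to a total δ-stable filter base on X. -/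
open Set Topology

/-! For filter bases, ω-closed ⇒ stable under countable intersections ⇒ δ-stable, and closing a
δ-stable filter base under countable intersections yields an ω-closed one containing it. Since
totality passes to larger families, each of the three extension properties implies the others. -/

section CountableInterClosure

variable {X : Type*}

def countableInterClosure (F : Set (Set X)) : Set (Set X) :=
  {A | ∃ S ⊆ F, S.Countable ∧ S.Nonempty ∧ ⋂₀ S = A}

theorem subset_countableInterClosure (F : Set (Set X)) : F ⊆ countableInterClosure F :=
  fun A hA => ⟨{A}, singleton_subset_iff.2 hA, countable_singleton A, singleton_nonempty A,
    sInter_singleton A⟩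

theorem omegaClosedFB_countableInterClosure (F : Set (Set X)) :
    OmegaClosedFB (countableInterClosure F) := by
  intro S hS hSc ⟨A₀, hA₀⟩
  choose T hTF hTc hTn hTA using fun A : S => hS A.2
  have : Countable S := hSc.to_subtype
  refine ⟨⋃ A : S, T A, iUnion_subset hTF, countable_iUnion hTc,
    (hTn ⟨A₀, hA₀⟩).mono (subset_iUnion T ⟨A₀, hA₀⟩), ?_⟩
  rw [sInter_iUnion, sInter_eq_iInter]
  exact iInter_congr hTA

theorem DeltaStableFB.filterBaseOn_countableInterClosure {F : Set (Set X)} (hne : F.Nonempty)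
    (hF : DeltaStableFB F) : FilterBaseOn X (countableInterClosure F) := by
  refine ⟨hne.mono (subset_countableInterClosure F), ?_, ?_⟩
  · rintro ⟨S, hSF, hSc, hSn, hS⟩
    exact (hF S hSF hSc hSn).ne_empty hS
  · rintro _ ⟨S, hSF, hSc, hSn, rfl⟩ _ ⟨T, hTF, hTc, -, rfl⟩
    exact ⟨S ∪ T, union_subset hSF hTF, hSc.union hTc, hSn.mono subset_union_left,
      sInter_union S T⟩

theorem DeltaStableFB.exists_omegaClosedFB {F : Set (Set X)} (hne : F.Nonempty)
    (hF : DeltaStableFB F) : ∃ G, FilterBaseOn X G ∧ OmegaClosedFB G ∧ F ⊆ G :=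
  ⟨_, hF.filterBaseOn_countableInterClosure hne, omegaClosedFB_countableInterClosure F,
    subset_countableInterClosure F⟩

end CountableInterClosure

section Stability

variable {X : Type*} {F : Set (Set X)}

theorem OmegaClosedFB.stableCI (hne : F.Nonempty) (hF : OmegaClosedFB F) : StableCI F := by
  intro S hSF hSc
  rcases S.eq_empty_or_nonempty with rfl | hSn
  · obtain ⟨A, hA⟩ := hne
    exact ⟨A, hA, by simp only [sInter_empty, subset_univ]⟩
  · exact ⟨⋂₀ S, hF S hSF hSc hSn, subset_rfl⟩

theorem StableCI.deltaStableFB (hempty : ∅ ∉ F) (hF : StableCI F) : DeltaStableFB F := by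
  intro S hSF hSc _
  obtain ⟨A, hA, hAS⟩ := hF S hSF hSc
  exact (nonempty_iff_ne_empty.2 fun h => hempty (h ▸ hA)).mono hAS

theorem OmegaClosedFB.deltaStableFB (hF : FilterBaseOn X F) (hω : OmegaClosedFB F) :
    DeltaStableFB F :=
  (hω.stableCI hF.1).deltaStableFB hF.2.1

end Stability

section TotalExtensions

variable {X : Type*} [TopologicalSpace X]

theorem TotalFB.mono {F G : Set (Set X)} (hF : TotalFB F) (hFG : F ⊆ G) : TotalFB G :=
  fun H hH hGH => hF H hH (hFG.trans hGH)

def HasTotalExtensions (X : Type*) [TopologicalSpace X] (P : Set (Set X) → Prop) : Prop :=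
  ∀ F : Set (Set X), FilterBaseOn X F → P F →
    ∃ H : Set (Set X), FilterBaseOn X H ∧ P H ∧ F ⊆ H ∧ TotalFB H

theorem hasTotalExtensions_iff {P Q : Set (Set X) → Prop}
    (hPQ : ∀ F, FilterBaseOn X F → P F → Q F)
    (hQP : ∀ F, FilterBaseOn X F → Q F → ∃ G, FilterBaseOn X G ∧ P G ∧ F ⊆ G) :
    HasTotalExtensions X P ↔ HasTotalExtensions X Q := by
  constructor
  · intro hP F hF hQ
    obtain ⟨G, hG, hGP, hFG⟩ := hQP F hF hQ
    obtain ⟨H, hH, hHP, hGH, hHtot⟩ := hP G hG hGP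
    exact ⟨H, hH, hPQ H hH hHP, hFG.trans hGH, hHtot⟩
  · intro hQ F hF hP
    obtain ⟨H, hH, hHQ, hFH, hHtot⟩ := hQ F hF (hPQ F hF hP)
    obtain ⟨G, hG, hGP, hHG⟩ := hQP H hH hHQ
    exact ⟨G, hG, hGP, hFH.trans hHG, hHtot.mono hHG⟩

end TotalExtensions

theorem stmt3 {X : Type*} [TopologicalSpace X] :
    (TotallyLindelofSpace X ↔
      ∀ F : Set (Set X), FilterBaseOn X F → OmegaClosedFB F →
        ∃ H : Set (Set X), FilterBaseOn X H ∧ OmegaClosedFB H ∧ F ⊆ H ∧ TotalFB H) ∧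
    (TotallyLindelofSpace X ↔
      ∀ F : Set (Set X), FilterBaseOn X F → DeltaStableFB F →
        ∃ H : Set (Set X), FilterBaseOn X H ∧ DeltaStableFB H ∧ F ⊆ H ∧ TotalFB H) := by
  have hωCI : HasTotalExtensions X OmegaClosedFB ↔ HasTotalExtensions X StableCI :=
    hasTotalExtensions_iff (fun F hF hω => hω.stableCI hF.1)
      fun F hF hCI => (hCI.deltaStableFB hF.2.1).exists_omegaClosedFB hF.1
  have hωδ : HasTotalExtensions X OmegaClosedFB ↔ HasTotalExtensions X DeltaStableFB :=
    hasTotalExtensions_iff (fun F hF hω => hω.deltaStableFB hF)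
      fun F hF hδ => hδ.exists_omegaClosedFB hF.1
  exact ⟨hωCI.symm, hωCI.symm.trans hωδ⟩
end

section
/- The one-point Lindelöfication L(ω₁) of a discrete set of size ω₁ is totally Lindelöf: every filter base on L(ω₁) stable under countable intersections extends to a total filter base stable under countable intersections. -/
/-!
Extend `F` by intersecting its members with those of a countably complete filter `l ≤ 𝓝 t`
that meets every member of `F`; the result is again stable under countable intersections, and
any filter base containing it has `t` in its adherence, since a member `A` with `t ∉ closure A`
would be disjoint from `B ∩ Aᶜ` for `B ∈ F`. If some member of `F` is countable, stability forces
a common point `p` of all members and `l = 𝓟 {p}` works; otherwise all members are uncountable,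
and `l = cocountable`, `t = ω₁` works because every neighbourhood of `ω₁` is cocountable.
-/

open Set Topology

/-- The underlying set of `L(ω₁)`: the ordinals `≤ ω₁`. -/
def Lomega1 : Type _ := {o : Ordinal // o ≤ omega1}

/-- The top point `ω₁` of `L(ω₁)`. -/
noncomputable def Lomega1.top : Lomega1 := ⟨omega1, le_refl _⟩

/-- The topology of the one-point Lindelöfication `L(ω₁)`: every point `α < ω₁` is isolated,
and the neighborhoods of the point `ω₁` are the sets containing it with countable complement. -/
instance : TopologicalSpace Lomega1 :=
  TopologicalSpace.generateFrom
    ({U | ∃ x : Lomega1, x.1 < omega1 ∧ U = {x}} ∪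
     {U | Lomega1.top ∈ U ∧ {x : Lomega1 | x ∉ U}.Countable})

open Filter

namespace FilterBaseOn

variable {X : Type*} {F : Set (Set X)}

/-- Otherwise each `p ∈ A` is missed by some member of `F`, and a member of `F` below these
countably many is disjoint from `A`. -/
theorem exists_forall_mem_of_countable (hF : FilterBaseOn X F) (hFci : StableCI F) {A : Set X}
    (hA : A ∈ F) (hAc : A.Countable) : ∃ p, ∀ B ∈ F, p ∈ B := by
  by_contra! hmiss
  choose B hBF hpB using hmiss
  obtain ⟨H, hHF, hHB⟩ := hFci (B '' A) (image_subset_iff.2 fun p _ => hBF p) (hAc.image B)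
  have hdisj : H ∩ A = ∅ :=
    eq_empty_of_forall_notMem fun p ⟨hpH, hpA⟩ => hpB p (hHB hpH _ (mem_image_of_mem B hpA))
  exact hF.2.1 (hdisj ▸ hF.2.2 H hHF A hA)

variable {l : Filter X}

theorem image2_inter (hF : FilterBaseOn X F) (hmeet : ∀ A ∈ F, ∀ N ∈ l, (A ∩ N).Nonempty) :
    FilterBaseOn X (image2 (· ∩ ·) F l.sets) := by
  obtain ⟨⟨A, hA⟩, -, hFinter⟩ := hF
  refine ⟨⟨A ∩ univ, mem_image2_of_mem hA l.univ_sets⟩, ?_, ?_⟩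
  · rintro ⟨A, hA, N, hN, hAN⟩
    exact (hmeet A hA N hN).ne_empty hAN
  · rintro _ ⟨A, hA, N, hN, rfl⟩ _ ⟨B, hB, M, hM, rfl⟩
    exact ⟨A ∩ B, hFinter A hA B hB, N ∩ M, l.inter_sets hN hM,
      (inter_inter_inter_comm A N B M).symm⟩

end FilterBaseOn

section image2_inter

variable {X : Type*} {F : Set (Set X)} {l : Filter X}

theorem subset_image2_inter : F ⊆ image2 (· ∩ ·) F l.sets :=
  fun A hA => ⟨A, hA, univ, l.univ_sets, inter_univ A⟩

theorem StableCI.image2_inter [CountableInterFilter l] (hF : StableCI F) :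
    StableCI (image2 (· ∩ ·) F l.sets) := by
  intro S hS hSc
  choose! A hAF N hNl hAN using fun s (hs : s ∈ S) => hS hs
  obtain ⟨H, hHF, hHA⟩ := hF (A '' S) (image_subset_iff.2 hAF) (hSc.image A)
  refine ⟨H ∩ ⋂ s ∈ S, N s, mem_image2_of_mem hHF ((countable_bInter_mem hSc).2 hNl), ?_⟩
  rintro x ⟨hxH, hxN⟩ s hs
  rw [← hAN s hs]
  exact ⟨hHA hxH _ (mem_image_of_mem A hs), mem_iInter₂.1 hxN s hs⟩

theorem totalFB_image2_inter [TopologicalSpace X] {t : X} (hlt : l ≤ 𝓝 t) (hF : F.Nonempty) :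
    TotalFB (image2 (· ∩ ·) F l.sets) := by
  intro H hH hsub
  refine ⟨t, mem_iInter₂.2 fun A hA => ?_⟩
  by_contra htA
  obtain ⟨B, hB⟩ := hF
  have hAt : Aᶜ ∈ 𝓝 t :=
    mem_of_superset (isClosed_closure.compl_mem_nhds htA) (compl_subset_compl.2 subset_closure)
  have hBA : B ∩ Aᶜ ∈ H := hsub (mem_image2_of_mem hB (hlt hAt))
  have hABA := hH.2.2 A hA _ hBA
  rw [inter_left_comm, inter_compl_self, inter_empty] at hABA
  exact hH.2.1 hABA

theorem StableCI.exists_totalFB [TopologicalSpace X] (l : Filter X) [CountableInterFilter l]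
    {t : X} (hlt : l ≤ 𝓝 t) (hF : FilterBaseOn X F) (hFci : StableCI F)
    (hmeet : ∀ A ∈ F, ∀ N ∈ l, (A ∩ N).Nonempty) :
    ∃ H : Set (Set X), FilterBaseOn X H ∧ StableCI H ∧ F ⊆ H ∧ TotalFB H :=
  ⟨_, hF.image2_inter hmeet, hFci.image2_inter, subset_image2_inter, totalFB_image2_inter hlt hF.1⟩

end image2_inter

instance Filter.countableInterFilter_cocountable {X : Type*} :
    CountableInterFilter (cocountable : Filter X) :=
  cardinalInterFilter_aleph_one_iff.1 inferInstance

theorem Lomega1.cocountable_le_nhds_top : cocountable ≤ 𝓝 Lomega1.top := by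
  refine le_nhds_iff.2 fun U htU hU => mem_cocountable.2 ?_
  induction hU with
  | basic V hV =>
    rcases hV with ⟨x, hx, rfl⟩ | ⟨-, hc⟩
    · exact absurd hx ((mem_singleton_iff.1 htU) ▸ lt_irrefl _)
    · exact hc
  | univ => simp
  | inter U V _ _ ihU ihV =>
    rw [compl_inter]
    exact (ihU htU.1).union (ihV htU.2)
  | sUnion S _ ih =>
    obtain ⟨U, hUS, htU⟩ := htU
    exact (ih U hUS htU).mono (compl_subset_compl.2 (subset_sUnion_of_mem hUS))

theorem stmt4 : TotallyLindelofSpace Lomega1 := by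
  intro F hF hFci
  by_cases hc : ∃ A ∈ F, A.Countable
  · obtain ⟨A, hA, hAc⟩ := hc
    obtain ⟨p, hp⟩ := hF.exists_forall_mem_of_countable hFci hA hAc
    refine hFci.exists_totalFB (𝓟 {p}) (principal_singleton p ▸ pure_le_nhds p) hF ?_
    exact fun A hA N hN => ⟨p, hp A hA, singleton_subset_iff.1 hN⟩
  · refine hFci.exists_totalFB cocountable Lomega1.cocountable_le_nhds_top hF ?_
    intro A hA N hN
    by_contra hAN
    exact hc ⟨A, hA, (mem_cocountable.1 hN).mono fun x hxA hxN => hAN ⟨x, hxA, hxN⟩⟩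
end

section
/- For every regular totally Lindelöf space X and every filter base F on X stable under countable intersections, there exists a compact set K ⊆ X such that F ∨ G_δ(K) = {F₀ ∩ F₁ : F₀, F₁ ∈ F ∪ G_δ(K)} is a total filter base stable under countable intersections extending F. -/
open Set Topology

lemma biInter_mem_of_inter_closed {X ι : Type*} {H : Set (Set X)}
    (hH : ∀ A ∈ H, ∀ B ∈ H, A ∩ B ∈ H) (s : ι → Set X) :
    ∀ t : Finset ι, t.Nonempty → (∀ i ∈ t, s i ∈ H) → (⋂ i ∈ t, s i) ∈ H := by
  classical
  intro t
  induction t using Finset.induction_on with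
  | empty => intro h; simp at h
  | @insert i t' hi ih =>
    intro _ hs
    rcases t'.eq_empty_or_nonempty with rfl | hne
    · simpa using hs i (Finset.mem_insert_self i _)
    · have h1 := hs i (Finset.mem_insert_self i _)
      have h2 := ih hne fun j hj => hs j (Finset.mem_insert_of_mem hj)
      have h3 := hH _ h1 _ h2
      simpa [Finset.set_biInter_insert] using h3

set_option maxHeartbeats 1600000 in
theorem stmt5
    (vaughan : ∀ (Y : Type) (_ : TopologicalSpace Y), RegularSpace Y →
      ∀ F : Set (Set Y), FilterBaseOn Y F → TotalFB F →
        ∃ K : Set Y, K.Nonempty ∧ IsCompact K ∧ ConvergesTo F K)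
    (X : Type) [TopologicalSpace X] [RegularSpace X] (hTL : TotallyLindelofSpace X)
    (F : Set (Set X)) (hF : FilterBaseOn X F) (hS : StableCI F) :
    ∃ K : Set X, IsCompact K ∧
      FilterBaseOn X (joinFB F (GdeltaNbhds K)) ∧
      StableCI (joinFB F (GdeltaNbhds K)) ∧
      TotalFB (joinFB F (GdeltaNbhds K)) ∧
      F ⊆ joinFB F (GdeltaNbhds K) := by
  classical
  obtain ⟨H, hHfb, hHci, hFH, hHtot⟩ := hTL F hF hS
  obtain ⟨K, hKne, hKcomp, hKconv⟩ := vaughan X ‹_› ‹_› H hHfb hHtot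
  obtain ⟨T0, hT0⟩ := hF.1
  -- every Gδ neighborhood of K contains a member of H
  have hGd : ∀ G ∈ GdeltaNbhds K, ∃ B ∈ H, B ⊆ G := by
    rintro G ⟨hKG, T, hTopen, hTc, rfl⟩
    have hsel : ∀ t : T, ∃ A ∈ H, A ⊆ (t : Set X) := fun t =>
      hKconv t (hTopen t t.2) (hKG.trans (sInter_subset_of_mem t.2))
    choose A hA hAsub using hsel
    haveI := hTc.to_subtype
    obtain ⟨B, hB, hBsub⟩ := hHci (range A) (range_subset_iff.2 hA) (countable_range A)
    refine ⟨B, hB, fun x hx => mem_sInter.2 fun t ht => ?_⟩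
    exact hAsub ⟨t, ht⟩ (hBsub hx _ ⟨⟨t, ht⟩, rfl⟩)
  have hunivG : univ ∈ GdeltaNbhds K := ⟨subset_univ _, IsGδ.univ⟩
  have hGdint : ∀ g₁ ∈ GdeltaNbhds K, ∀ g₂ ∈ GdeltaNbhds K, g₁ ∩ g₂ ∈ GdeltaNbhds K := by
    rintro g₁ ⟨h1, h1'⟩ g₂ ⟨h2, h2'⟩
    exact ⟨subset_inter h1 h2, h1'.inter h2'⟩
  -- decomposition: every member of the join contains f ∩ g with f ∈ F, g ∈ Gδ(K)
  have decomp : ∀ s ∈ joinFB F (GdeltaNbhds K),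
      ∃ f ∈ F, ∃ g ∈ GdeltaNbhds K, f ∩ g ⊆ s := by
    rintro s ⟨a, ha, b, hb, rfl⟩
    rcases ha with ha | ha <;> rcases hb with hb | hb
    · exact ⟨a ∩ b, hF.2.2 a ha b hb, univ, hunivG, fun x hx => hx.1⟩
    · exact ⟨a, ha, b, hb, subset_rfl⟩
    · exact ⟨b, hb, a, ha, fun x hx => ⟨hx.2, hx.1⟩⟩
    · exact ⟨T0, hT0, a ∩ b, hGdint a ha b hb, fun x hx => hx.2⟩
  -- canonical representation
  have hrep : ∀ s ∈ joinFB F (GdeltaNbhds K),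
      ∃ f ∈ F ∪ GdeltaNbhds K, ∃ g ∈ GdeltaNbhds K, s = f ∩ g := by
    rintro s ⟨a, ha, b, hb, rfl⟩
    rcases ha with ha | ha <;> rcases hb with hb | hb
    · exact ⟨a ∩ b, Or.inl (hF.2.2 a ha b hb), univ, hunivG, (inter_univ _).symm⟩
    · exact ⟨a, Or.inl ha, b, hb, rfl⟩
    · exact ⟨b, Or.inl hb, a, ha, inter_comm a b⟩
    · exact ⟨a ∩ b, Or.inr (hGdint a ha b hb), a ∩ b, hGdint a ha b hb, (inter_self _).symm⟩
  have hFsub : F ⊆ joinFB F (GdeltaNbhds K) := fun A hA =>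
    ⟨A, Or.inl hA, A, Or.inl hA, (inter_self A).symm⟩
  have hempty : ∅ ∉ joinFB F (GdeltaNbhds K) := by
    intro h
    obtain ⟨f, hf, g, hg, hsub⟩ := decomp ∅ h
    obtain ⟨B, hB, hBg⟩ := hGd g hg
    have hmem : f ∩ B ∈ H := hHfb.2.2 f (hFH hf) B hB
    have : f ∩ B = ∅ := subset_empty_iff.1 fun x hx => hsub ⟨hx.1, hBg hx.2⟩
    exact hHfb.2.1 (this ▸ hmem)
  have hfb : FilterBaseOn X (joinFB F (GdeltaNbhds K)) := by
    refine ⟨⟨T0, hFsub hT0⟩, hempty, ?_⟩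
    intro A hA B hB
    obtain ⟨f, hf, g, hg, rfl⟩ := hrep A hA
    obtain ⟨f', hf', g', hg', rfl⟩ := hrep B hB
    rcases hf with hf | hf <;> rcases hf' with hf' | hf'
    · exact ⟨f ∩ f', Or.inl (hF.2.2 f hf f' hf'), g ∩ g',
        Or.inr (hGdint g hg g' hg'), by ext x; simp only [mem_inter_iff]; tauto⟩
    · exact ⟨f, Or.inl hf, f' ∩ (g ∩ g'), Or.inr (hGdint f' hf' _ (hGdint g hg g' hg')),
        by ext x; simp only [mem_inter_iff]; tauto⟩
    · exact ⟨f', Or.inl hf', f ∩ (g ∩ g'), Or.inr (hGdint f hf _ (hGdint g hg g' hg')),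
        by ext x; simp only [mem_inter_iff]; tauto⟩
    · refine ⟨(f ∩ g) ∩ (f' ∩ g'), Or.inr ?_, (f ∩ g) ∩ (f' ∩ g'), Or.inr ?_,
        (inter_self _).symm⟩ <;>
      exact hGdint _ (hGdint f hf g hg) _ (hGdint f' hf' g' hg')
  have hci : StableCI (joinFB F (GdeltaNbhds K)) := by
    intro S hSsub hSc
    choose f hf g hg hfg using fun s : S => decomp s (hSsub s.2)
    haveI := hSc.to_subtype
    obtain ⟨A, hAF, hAsub⟩ := hS (range f) (range_subset_iff.2 hf) (countable_range f)
    have hGmem : ⋂₀ range g ∈ GdeltaNbhds K := by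
      refine ⟨subset_sInter ?_, IsGδ.sInter ?_ (countable_range g)⟩
      · rintro t ⟨s, rfl⟩; exact (hg s).1
      · rintro t ⟨s, rfl⟩; exact (hg s).2
    refine ⟨A ∩ ⋂₀ range g, ⟨A, Or.inl hAF, ⋂₀ range g, Or.inr hGmem, rfl⟩, ?_⟩
    intro x hx
    refine mem_sInter.2 fun s hs => hfg ⟨s, hs⟩ ⟨?_, ?_⟩
    · exact hAsub hx.1 _ ⟨⟨s, hs⟩, rfl⟩
    · exact hx.2 _ ⟨⟨s, hs⟩, rfl⟩
  have htot : TotalFB (joinFB F (GdeltaNbhds K)) := by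
    intro H' hH'fb hsub'
    have hopen_mem : ∀ U : Set X, IsOpen U → K ⊆ U → U ∈ H' := fun U hU hKU =>
      hsub' ⟨U, Or.inr ⟨hKU, hU.isGδ⟩, U, Or.inr ⟨hKU, hU.isGδ⟩, (inter_self U).symm⟩
    by_contra hcon
    have hx : ∀ x : K, ∃ A ∈ H', (x : X) ∉ closure A := by
      intro x
      by_contra hx'
      push_neg at hx'
      exact hcon ⟨x, mem_iInter₂.2 hx'⟩
    choose A hA hxA using hx
    have hcover : K ⊆ ⋃ x : K, (closure (A x))ᶜ := fun y hy =>
      mem_iUnion.2 ⟨⟨y, hy⟩, hxA ⟨y, hy⟩⟩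
    obtain ⟨t, ht⟩ := hKcomp.elim_finite_subcover (fun x : K => (closure (A x))ᶜ)
      (fun x => isClosed_closure.isOpen_compl) hcover
    have htne : t.Nonempty := by
      obtain ⟨y, hy⟩ := hKne
      obtain ⟨x, hx', _⟩ := mem_iUnion₂.1 (ht hy)
      exact ⟨x, hx'⟩
    have hUopen : IsOpen (⋃ x ∈ t, (closure (A x))ᶜ) :=
      isOpen_biUnion fun _ _ => isClosed_closure.isOpen_compl
    have hUm : (⋃ x ∈ t, (closure (A x))ᶜ) ∈ H' := hopen_mem _ hUopen ht
    have hIm : (⋂ x ∈ t, A x) ∈ H' :=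
      biInter_mem_of_inter_closed hH'fb.2.2 A t htne fun i hi => hA i
    have hBm := hH'fb.2.2 _ hUm _ hIm
    have hBne : ((⋃ x ∈ t, (closure (A x))ᶜ) ∩ ⋂ x ∈ t, A x).Nonempty :=
      nonempty_iff_ne_empty.2 fun he => hH'fb.2.1 (he ▸ hBm)
    obtain ⟨y, hyU, hyI⟩ := hBne
    obtain ⟨x, hxt, hyc⟩ := mem_iUnion₂.1 hyU
    exact hyc (subset_closure (mem_iInter₂.1 hyI x hxt))
  exact ⟨K, hKcomp, hfb, hci, htot, hFsub⟩
end

section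
/- If X is a Lindelöf topological space and F is a filter base on X stable under countable intersections, then F converges to its adherence ad(F) = ⋂{cl(F) : F ∈ F}, i.e., every open set containing ad(F) contains some member of F. -/
open Set Topology

/-! A family stable under countable intersections is a basis of the countable-intersection filter
it generates, and the cluster points of that filter form the adherence of the family. Lindelöfness
says exactly that a countable-intersection filter is eventually in every open set containing all
its cluster points. -/

theorem StableCI.hasBasis_countableGenerate {X : Type*} {F : Set (Set X)} (hS : StableCI F) :
    (Filter.countableGenerate F).HasBasis (· ∈ F) id := by
  refine ⟨fun s => Filter.mem_countableGenerate_iff.trans ⟨?_, ?_⟩⟩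
  · rintro ⟨S, hSF, hSc, hSs⟩
    obtain ⟨H, hHF, hHS⟩ := hS S hSF hSc
    exact ⟨H, hHF, hHS.trans hSs⟩
  · rintro ⟨A, hA, hAs⟩
    exact ⟨{A}, singleton_subset_iff.2 hA, countable_singleton A, by simpa using hAs⟩

theorem stmt6_general {X : Type*} [TopologicalSpace X] [LindelofSpace X]
    (F : Set (Set X)) (hS : StableCI F) :
    ConvergesTo F (⋂ A ∈ F, closure A) := by
  intro U hU hsub
  have hB := hS.hasBasis_countableGenerate
  refine hB.mem_iff.1 <| isLindelof_univ.adherence_nhdset (Filter.le_principal_iff.2 Filter.univ_mem)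
    hU fun x _ hx => hsub ?_
  exact mem_iInter₂.2 (hB.clusterPt_iff_forall_mem_closure.1 hx)

theorem stmt6 {X : Type*} [TopologicalSpace X] [LindelofSpace X]
    (F : Set (Set X)) (hF : FilterBaseOn X F) (hS : StableCI F) :
    ConvergesTo F (⋂ A ∈ F, closure A) :=
  stmt6_general F hS
end

section
/- Let ρ be the topology on ℝ with base {U \ E : U Euclidean-open, E countable}. Then (ℝ, ρ) is a Menger space: for every sequence ⟨A_n⟩ of ρ-open covers of ℝ there exist finite subfamilies B_n ⊆ A_n with ⋃_n ⋃B_n = ℝ. -/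
/-!
Given ρ-open covers `A n`, every point `x` lies in some `U \ E ⊆ V ∈ A n` with `U` Euclidean-open
and `E` countable. Since ℝ is σ-compact, finitely many of the `U`'s chosen from each cover
already cover ℝ (Menger property of σ-compact spaces), so the corresponding members of the
covers `A (2 n)` miss only the countably many points of the `E`'s. These points are then
picked up one at a time by the covers `A (2 n + 1)`.
-/

open Set Topology

/-- The countable-complement refinement of the usual topology on `ℝ`, generated by the sets
`U \ E` with `U` Euclidean-open and `E` countable. -/
def rho : TopologicalSpace ℝ :=
  TopologicalSpace.generateFrom
    {A | ∃ (U E : Set ℝ), IsOpen U ∧ E.Countable ∧ A = U \ E}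

open TopologicalSpace

variable {X : Type*}

def FiniteSelectionCovers (A : ℕ → Set (Set X)) (s : Set X) : Prop :=
  ∃ B : ℕ → Set (Set X), (∀ n, B n ⊆ A n ∧ (B n).Finite) ∧ s ⊆ ⋃ n, ⋃₀ B n

theorem FiniteSelectionCovers.union_of_even_odd {A : ℕ → Set (Set X)} {s t : Set X}
    (hs : FiniteSelectionCovers (fun n => A (2 * n)) s)
    (ht : FiniteSelectionCovers (fun n => A (2 * n + 1)) t) :
    FiniteSelectionCovers A (s ∪ t) := by
  obtain ⟨B, hBA, hsB⟩ := hs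
  obtain ⟨B', hB'A, htB'⟩ := ht
  have h_even (k : ℕ) : (2 * k) % 2 = 0 ∧ 2 * k / 2 = k := by omega
  have h_odd (k : ℕ) : (2 * k + 1) % 2 ≠ 0 ∧ (2 * k + 1) / 2 = k := by omega
  refine ⟨fun n => if n % 2 = 0 then B (n / 2) else B' (n / 2), fun n => ?_, ?_⟩
  · obtain ⟨k, rfl | rfl⟩ := Nat.even_or_odd' n
    · simpa only [h_even, if_true] using hBA k
    · simpa only [h_odd, if_false] using hB'A k
  · rintro x (hx | hx)
    · obtain ⟨k, hk⟩ := mem_iUnion.1 (hsB hx)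
      exact mem_iUnion.2 ⟨2 * k, by simpa only [h_even, if_true] using hk⟩
    · obtain ⟨k, hk⟩ := mem_iUnion.1 (htB' hx)
      exact mem_iUnion.2 ⟨2 * k + 1, by simpa only [h_odd, if_false] using hk⟩

theorem Set.Countable.finiteSelectionCovers {A : ℕ → Set (Set X)} {C : Set X}
    (hC : C.Countable) (hA : ∀ n, C ⊆ ⋃₀ A n) : FiniteSelectionCovers A C := by
  rcases C.eq_empty_or_nonempty with rfl | hne
  · exact ⟨fun _ => ∅, fun _ => ⟨empty_subset _, finite_empty⟩, empty_subset _⟩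
  obtain ⟨f, rfl⟩ := hC.exists_eq_range hne
  choose W hWA hfW using fun n => hA n (mem_range_self n)
  refine ⟨fun n => {W n}, fun n => ⟨singleton_subset_iff.2 (hWA n), finite_singleton _⟩, ?_⟩
  rintro _ ⟨n, rfl⟩
  exact mem_iUnion.2 ⟨n, W n, rfl, hfW n⟩

theorem SigmaCompactSpace.exists_finset_iUnion_eq_univ [TopologicalSpace X]
    [SigmaCompactSpace X] {ι : Type*} {U : ℕ → ι → Set X} (hU : ∀ n i, IsOpen (U n i))
    (hcov : ∀ n, ⋃ i, U n i = univ) :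
    ∃ t : ℕ → Finset ι, ⋃ n, ⋃ i ∈ t n, U n i = univ := by
  choose t ht using fun n => (isCompact_compactCovering X n).elim_finite_subcover (U n)
    (hU n) (hcov n ▸ subset_univ _)
  exact ⟨t, univ_subset_iff.1 (iUnion_compactCovering X ▸ iUnion_mono ht)⟩

theorem exists_countable_finiteSelectionCovers_compl [TopologicalSpace X]
    [SigmaCompactSpace X] {A : ℕ → Set (Set X)}
    (hA : ∀ n x, ∃ V ∈ A n, ∃ U E : Set X, IsOpen U ∧ E.Countable ∧ x ∈ U \ E ∧ U \ E ⊆ V) :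
    ∃ C : Set X, C.Countable ∧ FiniteSelectionCovers A Cᶜ := by
  choose V hVA U E hU hE hxUE hUEV using hA
  obtain ⟨t, ht⟩ := SigmaCompactSpace.exists_finset_iUnion_eq_univ hU fun n =>
    eq_univ_of_forall fun x => mem_iUnion.2 ⟨x, (hxUE n x).1⟩
  refine ⟨⋃ n, ⋃ y ∈ t n, E n y,
    countable_iUnion fun n => (t n).countable_toSet.biUnion fun y _ => hE n y,
    fun n => V n '' (t n : Set X), fun n => ⟨image_subset_iff.2 fun y _ => hVA n y,
      (t n).finite_toSet.image _⟩, fun x hx => ?_⟩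
  obtain ⟨n, hn⟩ := mem_iUnion.1 (ht.symm ▸ mem_univ x : x ∈ ⋃ n, ⋃ y ∈ t n, U n y)
  obtain ⟨y, hy, hxU⟩ := mem_iUnion₂.1 hn
  have hxE : x ∉ E n y := fun h => hx (mem_iUnion.2 ⟨n, mem_iUnion₂.2 ⟨y, hy, h⟩⟩)
  exact mem_iUnion.2 ⟨n, V n y, mem_image_of_mem _ hy, hUEV n y ⟨hxU, hxE⟩⟩

theorem isTopologicalBasis_rho :
    @IsTopologicalBasis ℝ rho {A | ∃ U E : Set ℝ, IsOpen U ∧ E.Countable ∧ A = U \ E} := by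
  refine @IsTopologicalBasis.mk ℝ rho _ ?_ ?_ rfl
  · rintro _ ⟨U₁, E₁, hU₁, hE₁, rfl⟩ _ ⟨U₂, E₂, hU₂, hE₂, rfl⟩ x hx
    refine ⟨_, ⟨U₁ ∩ U₂, E₁ ∪ E₂, hU₁.inter hU₂, hE₁.union hE₂, ?_⟩, hx, subset_rfl⟩
    ext y
    simp only [mem_inter_iff, mem_sdiff, mem_union]
    tauto
  · exact eq_univ_of_forall fun x =>
      ⟨univ, ⟨univ, ∅, isOpen_univ, countable_empty, (sdiff_empty).symm⟩, mem_univ x⟩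

theorem exists_diff_countable_subset_of_isOpen_rho {V : Set ℝ} (hV : IsOpen[rho] V) {x : ℝ}
    (hx : x ∈ V) : ∃ U E : Set ℝ, IsOpen U ∧ E.Countable ∧ x ∈ U \ E ∧ U \ E ⊆ V := by
  obtain ⟨_, ⟨U, E, hU, hE, rfl⟩, hxUE, hUEV⟩ :=
    @IsTopologicalBasis.exists_subset_of_mem_open ℝ rho _ isTopologicalBasis_rho x V hx hV
  exact ⟨U, E, hU, hE, hxUE, hUEV⟩

theorem stmt8 (A : ℕ → Set (Set ℝ))
    (hopen : ∀ n, ∀ U ∈ A n, @IsOpen ℝ rho U)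
    (hcov : ∀ n, ⋃₀ (A n) = Set.univ) :
    ∃ B : ℕ → Set (Set ℝ), (∀ n, B n ⊆ A n ∧ (B n).Finite) ∧
      (⋃ n, ⋃₀ (B n)) = Set.univ := by
  have h_nhds (n : ℕ) (x : ℝ) : ∃ V ∈ A (2 * n), ∃ U E : Set ℝ,
      IsOpen U ∧ E.Countable ∧ x ∈ U \ E ∧ U \ E ⊆ V := by
    obtain ⟨V, hVA, hxV⟩ := mem_sUnion.1 (hcov (2 * n) ▸ mem_univ x)
    exact ⟨V, hVA, exists_diff_countable_subset_of_isOpen_rho (hopen _ V hVA) hxV⟩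
  obtain ⟨C, hC, h_compl⟩ := exists_countable_finiteSelectionCovers_compl h_nhds
  have h_C_covered := hC.finiteSelectionCovers (A := fun n => A (2 * n + 1))
    fun n => hcov _ ▸ subset_univ C
  obtain ⟨B, hBA, hB⟩ := h_compl.union_of_even_odd h_C_covered
  exact ⟨B, hBA, univ_subset_iff.1 (compl_union_self C ▸ hB)⟩
end

section
/- Let ρ be the topology on ℝ with base {U \ E : U Euclidean-open, E countable}. Then (ℝ, ρ) is totally Lindelöf. -/
open Set Topology

/-!
An ultrafilter on `X` either contains a countable set `C`, and is then principal as soon as it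
also contains a set meeting `C` in a finite set, or it contains the complement of every countable
set, and then it converges in the refined topology to any of its limits in the original one.
Hence a filter base containing a compact set `K`, and for each countable `C` a member meeting `C`
in a finite set, is total for the refinement. Given `F`, trace it on a compact `K` meeting all its
members: `K = {x}` if `x ∈ ⋂₀ F`, and otherwise σ-compactness and stability under countable
intersections provide `K`. Stability also yields, for each countable `C`, a member of `F`
meeting `C` only inside `⋂₀ F`, hence a member of the trace meeting `C` inside `K ∩ ⋂₀ F`.
-/

open Filter

variable {X : Type*}

abbrev cocountableRefinement (X : Type*) [TopologicalSpace X] : TopologicalSpace X :=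
  TopologicalSpace.generateFrom {A | ∃ (U E : Set X), IsOpen U ∧ E.Countable ∧ A = U \ E}

def traceFB (F : Set (Set X)) (K : Set X) : Set (Set X) :=
  {A | ∃ B ∈ F, B ∩ K ⊆ A}

section FilterBases

variable {F : Set (Set X)} {K : Set X}

lemma FilterBaseOn.exists_ultrafilter (hF : FilterBaseOn X F) :
    ∃ U : Ultrafilter X, ∀ A ∈ F, A ∈ U := by
  obtain ⟨⟨A₀, hA₀⟩, hempty, hFinter⟩ := hF
  let B : FilterBasis X := ⟨F, ⟨A₀, hA₀⟩, fun hA hA' => ⟨_, hFinter _ hA _ hA', subset_rfl⟩⟩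
  have : B.filter.NeBot := B.hasBasis.neBot_iff.2 fun hA =>
    nonempty_iff_ne_empty.2 fun h => hempty (h ▸ hA)
  obtain ⟨U, hU⟩ := Ultrafilter.exists_le B.filter
  exact ⟨U, fun A hA => hU (B.mem_filter_of_mem hA)⟩

lemma FilterBaseOn.traceFB (hF : FilterBaseOn X F) (hK : ∀ B ∈ F, (B ∩ K).Nonempty) :
    FilterBaseOn X (traceFB F K) := by
  obtain ⟨⟨B₀, hB₀⟩, -, hFinter⟩ := hF
  refine ⟨⟨B₀, B₀, hB₀, inter_subset_left⟩,
    fun ⟨B, hB, hBK⟩ => (hK B hB).ne_empty (subset_empty_iff.1 hBK), ?_⟩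
  rintro A ⟨B, hB, hBA⟩ A' ⟨B', hB', hBA'⟩
  exact ⟨B ∩ B', hFinter B hB B' hB', fun y hy => ⟨hBA ⟨hy.1.1, hy.2⟩, hBA' ⟨hy.1.2, hy.2⟩⟩⟩

lemma subset_traceFB : F ⊆ traceFB F K :=
  fun B hB => ⟨B, hB, inter_subset_left⟩

lemma StableCI.traceFB (hS : StableCI F) : StableCI (traceFB F K) := by
  intro S hSF hSc
  choose! B hBF hBS using fun A (hA : A ∈ S) => (hSF hA : ∃ B ∈ F, B ∩ K ⊆ A)
  obtain ⟨B', hB'F, hB'⟩ := hS (B '' S) (image_subset_iff.2 hBF) (hSc.image B)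
  exact ⟨B' ∩ K, ⟨B', hB'F, subset_rfl⟩, fun y hy A hA =>
    hBS A hA ⟨hB' hy.1 _ (mem_image_of_mem B hA), hy.2⟩⟩

lemma StableCI.exists_inter_subset_sInter (hS : StableCI F) {C : Set X} (hC : C.Countable) :
    ∃ B ∈ F, B ∩ C ⊆ ⋂₀ F := by
  have hmiss : ∀ c ∈ C \ ⋂₀ F, ∃ B ∈ F, c ∉ B := fun c hc => by
    simpa only [mem_sInter, not_forall, exists_prop] using hc.2
  choose! B hBF hcB using hmiss
  obtain ⟨B', hB'F, hB'⟩ :=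
    hS (B '' (C \ ⋂₀ F)) (image_subset_iff.2 hBF) ((hC.mono sdiff_subset).image B)
  refine ⟨B', hB'F, fun c ⟨hcB', hcC⟩ => by_contra fun hc => ?_⟩
  exact hcB c ⟨hcC, hc⟩ (hB' hcB' _ (mem_image_of_mem B ⟨hcC, hc⟩))

end FilterBases

section Topology

variable [TopologicalSpace X]

lemma totalFB_of_forall_ultrafilter {H : Set (Set X)}
    (h : ∀ U : Ultrafilter X, (∀ A ∈ H, A ∈ U) → ∃ x, (U : Filter X) ≤ 𝓝 x) : TotalFB H := by
  intro G hG hHG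
  obtain ⟨U, hU⟩ := hG.exists_ultrafilter
  obtain ⟨x, hx⟩ := h U fun A hA => hU A (hHG hA)
  exact ⟨x, mem_iInter₂.2 fun A hA => mem_closure_iff_ultrafilter.2 ⟨U, hU A hA, hx⟩⟩

lemma le_nhds_cocountableRefinement {f : Filter X} {x : X} (hx : f ≤ 𝓝 x)
    (hc : f ≤ cocountable) : f ≤ @nhds X (cocountableRefinement X) x := by
  rw [cocountableRefinement, TopologicalSpace.nhds_generateFrom]
  simp only [le_iInf_iff, le_principal_iff]
  rintro _ ⟨hxA, U, E, hU, hE, rfl⟩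
  have hEc : Eᶜ ∈ cocountable := mem_cocountable.2 (by rwa [compl_compl])
  exact inter_mem (hx (hU.mem_nhds hxA.1)) (hc hEc)

lemma totalFB_cocountableRefinement {H : Set (Set X)} {K : Set X} (hK : IsCompact K)
    (hKH : K ∈ H) (hfin : ∀ C : Set X, C.Countable → ∃ B ∈ H, (B ∩ C).Finite) :
    @TotalFB X (cocountableRefinement X) H := by
  refine @totalFB_of_forall_ultrafilter X (cocountableRefinement X) H fun U hU => ?_
  by_cases hC : ∃ C ∈ U, C.Countable
  · obtain ⟨C, hCU, hC⟩ := hC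
    obtain ⟨B, hBH, hBC⟩ := hfin C hC
    obtain ⟨x, -, rfl⟩ := U.eq_pure_of_finite_mem hBC (inter_mem (hU B hBH) hCU)
    exact ⟨x, @pure_le_nhds X (cocountableRefinement X) x⟩
  · obtain ⟨x, -, hx⟩ := hK.ultrafilter_le_nhds U (le_principal_iff.2 (hU K hKH))
    refine ⟨x, le_nhds_cocountableRefinement hx fun s hs => ?_⟩
    exact Ultrafilter.compl_notMem_iff.1 fun hsc => hC ⟨_, hsc, mem_cocountable.1 hs⟩

lemma exists_isCompact_forall_inter_nonempty [SigmaCompactSpace X] {F : Set (Set X)}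
    (hempty : ∅ ∉ F) (hS : StableCI F) : ∃ K, IsCompact K ∧ ∀ B ∈ F, (B ∩ K).Nonempty := by
  by_contra! h
  choose B hBF hB using fun n => h (compactCovering X n) (isCompact_compactCovering X n)
  obtain ⟨B', hB'F, hB'⟩ := hS (range B) (range_subset_iff.2 hBF) (countable_range B)
  refine hempty (eq_empty_of_forall_notMem (fun y hy => ?_) ▸ hB'F)
  obtain ⟨n, hn⟩ := mem_iUnion.1 ((iUnion_compactCovering X).symm ▸ mem_univ y)
  exact (hB n).subset ⟨hB' hy _ (mem_range_self n), hn⟩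

lemma exists_isCompact_forall_inter_nonempty_and_finite_inter_sInter [SigmaCompactSpace X]
    {F : Set (Set X)} (hempty : ∅ ∉ F) (hS : StableCI F) :
    ∃ K, IsCompact K ∧ (∀ B ∈ F, (B ∩ K).Nonempty) ∧ (K ∩ ⋂₀ F).Finite := by
  rcases (⋂₀ F).eq_empty_or_nonempty with h | ⟨x, hx⟩
  · obtain ⟨K, hK, hKF⟩ := exists_isCompact_forall_inter_nonempty hempty hS
    exact ⟨K, hK, hKF, by simp [h]⟩
  · exact ⟨{x}, isCompact_singleton, fun B hB => ⟨x, hx B hB, rfl⟩,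
      (finite_singleton x).inter_of_left _⟩

theorem totallyLindelofSpace_cocountableRefinement [SigmaCompactSpace X] :
    @TotallyLindelofSpace X (cocountableRefinement X) := by
  intro F hF hS
  obtain ⟨K, hK, hKF, hKcore⟩ :=
    exists_isCompact_forall_inter_nonempty_and_finite_inter_sInter hF.2.1 hS
  obtain ⟨B₀, hB₀⟩ := hF.1
  refine ⟨traceFB F K, hF.traceFB hKF, hS.traceFB, subset_traceFB,
    totalFB_cocountableRefinement hK ⟨B₀, hB₀, inter_subset_right⟩ fun C hC => ?_⟩
  obtain ⟨B, hB, hBC⟩ := hS.exists_inter_subset_sInter hC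
  exact ⟨B ∩ K, ⟨B, hB, subset_rfl⟩, hKcore.subset fun y hy => ⟨hy.1.2, hBC ⟨hy.1.1, hy.2⟩⟩⟩

end Topology

theorem stmt9 : @TotallyLindelofSpace ℝ rho :=
  totallyLindelofSpace_cocountableRefinement
end

section
/- L(ω₁) is not a Frolik space: there is no homeomorphism of L(ω₁) onto a closed subspace of a countable product of σ-compact spaces. -/
open Set Topology

/-!
The isolated points of `L(ω₁)` form an uncountable set all of whose countable subsets are closed
and discrete, and a closed embedding carries such a set along. In a countable product of
σ-compact spaces this fails: shrinking an uncountable set coordinate by coordinate into single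
members of the compact coverings, while keeping it uncountable, yields an injective sequence
whose range lies in a product of compact sets, hence has an accumulation point.
-/

open Filter

section Combinatorics

variable {X : Type*}

lemma exists_not_countable_inter_of_cover {ι : Type*} [Countable ι] {C : Set X}
    (hC : ¬ C.Countable) {T : ι → Set X} (hT : ∀ x, ∃ m, x ∈ T m) : ∃ m, ¬ (C ∩ T m).Countable := by
  by_contra! h
  exact hC ((countable_iUnion h).mono fun x hx ↦ mem_iUnion.2 ((hT x).imp fun _ ↦ And.intro hx))

lemma exists_antitone_not_countable_of_covers (T : ℕ → ℕ → Set X) (hT : ∀ n x, ∃ m, x ∈ T n m)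
    {D : Set X} (hD : ¬ D.Countable) :
    ∃ (g : ℕ → ℕ) (B : ℕ → Set X), Antitone B ∧ B 0 ⊆ D ∧ (∀ n, ¬ (B n).Countable) ∧
      ∀ n, B (n + 1) ⊆ T n (g n) := by
  choose M hM using fun (C : {C : Set X // ¬ C.Countable}) n ↦
    exists_not_countable_inter_of_cover C.2 (hT n)
  let B : ℕ → {C : Set X // ¬ C.Countable} :=
    fun n ↦ Nat.rec ⟨D, hD⟩ (fun k C ↦ ⟨C.1 ∩ T k (M C k), hM C k⟩) n
  exact ⟨fun n ↦ M (B n) n, fun n ↦ (B n).1,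
    antitone_nat_of_succ_le fun _ ↦ inter_subset_left, subset_rfl, fun n ↦ (B n).2,
    fun _ ↦ inter_subset_right⟩

lemma exists_injective_forall_mem_of_infinite {s : ℕ → Set X} (hs : ∀ n, (s n).Infinite) :
    ∃ d : ℕ → X, Function.Injective d ∧ ∀ n, d n ∈ s n := by
  classical
  choose φ hφ using fun n (t : Finset X) ↦ (hs n).exists_notMem_finset t
  -- `l n` is the finite set of the values chosen before step `n`
  let l : ℕ → Finset X := fun n ↦ Nat.rec ∅ (fun k t ↦ insert (φ k t) t) n
  have hl : Monotone l := monotone_nat_of_le_succ fun _ ↦ Finset.subset_insert _ _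
  refine ⟨fun n ↦ φ n (l n), Function.Injective.of_lt_imp_ne fun j k hjk hjk' ↦ ?_,
    fun n ↦ (hφ n (l n)).1⟩
  exact (hφ k (l k)).2 (hjk' ▸ hl hjk (Finset.mem_insert_self _ _))

end Combinatorics

def HasOmega1DiscreteSet (X : Type*) [TopologicalSpace X] : Prop :=
  ∃ D : Set X, ¬ D.Countable ∧ ∀ E ⊆ D, E.Countable → IsClosed E ∧ IsDiscrete E

theorem HasOmega1DiscreteSet.of_isClosedEmbedding {X Y : Type*} [TopologicalSpace X]
    [TopologicalSpace Y] {f : X → Y} (h : HasOmega1DiscreteSet X) (hf : IsClosedEmbedding f) :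
    HasOmega1DiscreteSet Y := by
  obtain ⟨D, hD, hDE⟩ := h
  refine ⟨f '' D, fun hc ↦ hD ((hc.preimage hf.injective).mono (subset_preimage_image f D)),
    fun E hE hEc ↦ ?_⟩
  obtain ⟨hc, hd⟩ := hDE (f ⁻¹' E) ((preimage_mono hE).trans (hf.injective.preimage_image D).subset)
    (hEc.preimage hf.injective)
  rw [← image_preimage_eq_of_subset (hE.trans (image_subset_range f D))]
  exact ⟨hf.isClosedMap _ hc, hd.image hf.isInducing⟩

theorem exists_countable_subset_accPt_of_not_countable {S : ℕ → Type*}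
    [∀ n, TopologicalSpace (S n)] [∀ n, SigmaCompactSpace (S n)] {D : Set (∀ n, S n)}
    (hD : ¬ D.Countable) : ∃ E ⊆ D, E.Countable ∧ ∃ x, AccPt x (𝓟 E) := by
  obtain ⟨g, B, hB, hBD, hBunc, hBT⟩ := exists_antitone_not_countable_of_covers
    (fun n m ↦ {x | x n ∈ compactCovering (S n) m}) (fun n x ↦ exists_mem_compactCovering (x n)) hD
  obtain ⟨d, hd, hdB⟩ := exists_injective_forall_mem_of_infinite fun n hfin ↦
    hBunc n hfin.countable
  -- only the finitely many `d k` with `k ≤ i` may leave `compactCovering (S i) (g i)`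
  have hdC : range d ⊆ univ.pi fun i ↦
      compactCovering (S i) (g i) ∪ (fun k ↦ d k i) '' Iic i := by
    rintro _ ⟨k, rfl⟩ i -
    rcases le_or_gt k i with hki | hik
    · exact Or.inr ⟨k, hki, rfl⟩
    · exact Or.inl (hBT i (hB hik (hdB k)))
  obtain ⟨x, -, hx⟩ := (infinite_range_of_injective hd).exists_accPt_of_subset_isCompact
    (isCompact_univ_pi fun i ↦
      (isCompact_compactCovering _ _).union ((finite_Iic i).image _).isCompact) hdC
  exact ⟨range d, range_subset_iff.2 fun k ↦ hBD (hB (Nat.zero_le k) (hdB k)),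
    countable_range d, x, hx⟩

theorem not_hasOmega1DiscreteSet_pi {S : ℕ → Type*} [∀ n, TopologicalSpace (S n)]
    [∀ n, SigmaCompactSpace (S n)] : ¬ HasOmega1DiscreteSet (∀ n, S n) := by
  rintro ⟨D, hD, hDE⟩
  obtain ⟨E, hED, hE, x, hx⟩ := exists_countable_subset_accPt_of_not_countable hD
  exact hx.ne (disjoint_iff.1 (isClosed_and_discrete_iff.1 (hDE E hED hE) x))

lemma Lomega1.isOpen_singleton {x : Lomega1} (hx : x.1 < omega1) : IsOpen ({x} : Set Lomega1) :=
  TopologicalSpace.isOpen_generateFrom_of_mem (Or.inl ⟨x, hx, rfl⟩)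

lemma Lomega1.isClosed_of_countable {A : Set Lomega1} (htop : Lomega1.top ∉ A)
    (hA : A.Countable) : IsClosed A := by
  rw [← isOpen_compl_iff]
  exact TopologicalSpace.isOpen_generateFrom_of_mem (Or.inr ⟨htop, by simpa [compl] using hA⟩)

lemma Lomega1.not_countable_setOf_lt_omega1 : ¬ {x : Lomega1 | x.1 < omega1}.Countable := by
  intro h
  have hinj : Function.Injective fun o : Iio omega1 ↦
      (⟨⟨o.1, o.2.le⟩, o.2⟩ : {x : Lomega1 | x.1 < omega1}) :=
    fun a b hab ↦ Subtype.ext (congrArg (fun z ↦ z.1.1) hab)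
  have hle := (Cardinal.mk_le_of_injective hinj).trans (Cardinal.le_aleph0_iff_set_countable.2 h)
  rw [Cardinal.mk_Iio_ordinal] at hle
  simp only [omega1, Cardinal.card_ord, Cardinal.lift_le_aleph0] at hle
  exact Cardinal.aleph0_lt_aleph_one.not_ge hle

theorem Lomega1.hasOmega1DiscreteSet : HasOmega1DiscreteSet Lomega1 := by
  refine ⟨{x | x.1 < omega1}, Lomega1.not_countable_setOf_lt_omega1, fun E hE hEc ↦
    ⟨Lomega1.isClosed_of_countable (fun h ↦ lt_irrefl omega1 (hE h)) hEc, ?_⟩⟩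
  exact isDiscrete_iff_forall_mem_exists_isOpen.2 fun x hx ↦
    ⟨{x}, Lomega1.isOpen_singleton (hE hx), singleton_inter_of_mem hx⟩

theorem stmt14 :
    ¬ ∃ (S : ℕ → Type 1) (t : ∀ n, TopologicalSpace (S n)),
        (∀ n, @SigmaCompactSpace (S n) (t n)) ∧
        ∃ f : Lomega1 → (∀ n, S n),
          @IsClosedEmbedding Lomega1 (∀ n, S n) _ (@Pi.topologicalSpace ℕ S t) f := by
  rintro ⟨S, t, hσ, f, hf⟩
  exact @not_hasOmega1DiscreteSet_pi S t hσ (Lomega1.hasOmega1DiscreteSet.of_isClosedEmbedding hf)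
end

section
/- Every regular Lindelöf P-space is Alster. -/
open Set Topology

theorem IsGδ.isOpen_of_isOpen_iInter_nat {X : Type*} [TopologicalSpace X]
    (hP : ∀ U : ℕ → Set X, (∀ n, IsOpen (U n)) → IsOpen (⋂ n, U n)) {G : Set X} (hG : IsGδ G) :
    IsOpen G := by
  obtain ⟨U, hU, rfl⟩ := hG.eq_iInter_nat
  exact hP U hU

theorem LindelofSpace.exists_countable_subset_sUnion_eq_univ {X : Type*} [TopologicalSpace X]
    [LindelofSpace X] {𝒰 : Set (Set X)} (h𝒰 : ∀ U ∈ 𝒰, IsOpen U) (hcover : ⋃₀ 𝒰 = univ) :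
    ∃ 𝒞 ⊆ 𝒰, 𝒞.Countable ∧ ⋃₀ 𝒞 = univ := by
  rw [sUnion_eq_biUnion] at hcover
  obtain ⟨𝒞, h𝒞𝒰, h𝒞, hsub⟩ :=
    isLindelof_univ.elim_countable_subcover_image h𝒰 hcover.symm.subset
  exact ⟨𝒞, h𝒞𝒰, h𝒞, by rw [sUnion_eq_biUnion]; exact univ_subset_iff.1 hsub⟩

theorem stmt18_general (X : Type*) [TopologicalSpace X] [LindelofSpace X]
    (hP : ∀ U : ℕ → Set X, (∀ n, IsOpen (U n)) → IsOpen (⋂ n, U n)) :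
    AlsterSpace X := by
  intro 𝒢 hGδ hcompact
  refine LindelofSpace.exists_countable_subset_sUnion_eq_univ
    (fun G hG ↦ (hGδ G hG).isOpen_of_isOpen_iInter_nat hP) ?_
  refine sUnion_eq_univ_iff.2 fun x ↦ ?_
  obtain ⟨G, hG, hxG⟩ := hcompact {x} isCompact_singleton
  exact ⟨G, hG, hxG rfl⟩

theorem stmt18 (X : Type*) [TopologicalSpace X] [RegularSpace X] [LindelofSpace X]
    (hP : ∀ U : ℕ → Set X, (∀ n, IsOpen (U n)) → IsOpen (⋂ n, U n)) :
    AlsterSpace X :=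
  stmt18_general X hP
end
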